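/- Let L be an abelian group and A = ⊕_{n∈L} A_n a noetherian L-graded commutative ring. Then A_0 is noetherian and each A_n is a finitely generated A_0-module. -/

import Mathlib

/-!
The degree-`n` projection `A → Aₙ` sends `a m` to `a₀ m` whenever `m ∈ Aₙ`. Hence for an
`A₀`-submodule `M ⊆ Aₙ` the ideal `MA` meets `Aₙ` exactly in `M`, so `M ↦ MA` is a strictly
monotone map from the `A₀`-submodules of `Aₙ` to the ideals of `A`, and the ascending chain
condition descends. For `n = 0` this says that `A₀` is noetherian.
-/

variable {L A : Type*} [AddCommGroup L] [DecidableEq L] [CommRing A]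
variable (𝒜 : L → AddSubgroup A) [GradedRing 𝒜]

/-- The degree-zero subring `A₀` acts on `A` by multiplication, making `A` an
`A₀`-algebra. -/
instance gradeZeroAlgebra : Algebra (𝒜 0) A :=
  RingHom.toAlgebra
    { toFun := Subtype.val, map_one' := rfl, map_mul' := fun _ _ => rfl,
      map_zero' := rfl, map_add' := fun _ _ => rfl }

namespace GradedRing

def gradeSubmodule (n : L) : Submodule (𝒜 0) A where
  carrier := 𝒜 n
  add_mem' := add_mem
  zero_mem' := zero_mem _
  smul_mem' c x hx := show (c : A) * x ∈ 𝒜 n from zero_add n ▸ SetLike.mul_mem_graded c.2 hx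

variable {𝒜}

theorem decompose_mem_of_mem_ideal_span {n : L} {M : Submodule (𝒜 0) A}
    (hM : (M : Set A) ⊆ 𝒜 n) {x : A} (hx : x ∈ Ideal.span (M : Set A)) :
    (DirectSum.decompose 𝒜 x n : A) ∈ M := by
  obtain ⟨k, a, m, rfl⟩ := Submodule.mem_span_set'.mp hx
  rw [← GradedRing.proj_apply, map_sum]
  refine sum_mem fun i _ => ?_
  have hdeg : (DirectSum.decompose 𝒜 (a i * m i) (0 + n) : A) =
      DirectSum.decompose 𝒜 (a i) 0 * m i :=
    DirectSum.coe_decompose_mul_add_of_right_mem 𝒜 (hM (m i).2)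
  rw [zero_add] at hdeg
  rw [GradedRing.proj_apply, smul_eq_mul, hdeg]
  exact M.smul_mem (DirectSum.decompose 𝒜 (a i) 0) (m i).2

theorem mem_of_mem_ideal_span {n : L} {M : Submodule (𝒜 0) A}
    (hM : (M : Set A) ⊆ 𝒜 n) {x : A} (hx : x ∈ Ideal.span (M : Set A)) (hxn : x ∈ 𝒜 n) :
    x ∈ M := by
  simpa [DirectSum.decompose_of_mem_same 𝒜 hxn] using decompose_mem_of_mem_ideal_span hM hx

theorem le_of_ideal_span_le {n : L} {M N : Submodule (𝒜 0) A}
    (hM : (M : Set A) ⊆ 𝒜 n) (hN : (N : Set A) ⊆ 𝒜 n)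
    (h : Ideal.span (M : Set A) ≤ Ideal.span (N : Set A)) : M ≤ N :=
  fun _ hx => mem_of_mem_ideal_span hN (h (Ideal.subset_span hx)) (hM hx)

theorem isNoetherian_of_subset_grade [IsNoetherianRing A] {n : L} (M : Submodule (𝒜 0) A)
    (hM : (M : Set A) ⊆ 𝒜 n) : IsNoetherian (𝒜 0) M := by
  let spanIdeal (N : Submodule (𝒜 0) M) : Ideal A := Ideal.span (N.map M.subtype : Set A)
  have hsub (N : Submodule (𝒜 0) M) : (N.map M.subtype : Set A) ⊆ 𝒜 n :=
    (Set.image_subset_range _ _).trans (by simpa using hM)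
  have hmono : Monotone spanIdeal := fun N₁ N₂ h => Ideal.span_mono (Submodule.map_mono h)
  have hinj : Function.Injective spanIdeal := fun N₁ N₂ h =>
    Submodule.map_injective_of_injective M.injective_subtype <| le_antisymm
      (le_of_ideal_span_le (hsub N₁) (hsub N₂) h.le)
      (le_of_ideal_span_le (hsub N₂) (hsub N₁) h.ge)
  exact isNoetherian_mk (hmono.strictMono_of_injective hinj).wellFoundedGT

variable (𝒜)

theorem isNoetherianRing_gradeZero [IsNoetherianRing A] : IsNoetherianRing (𝒜 0) := by
  let incl := Algebra.linearMap (𝒜 0) A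
  have : IsNoetherian (𝒜 0) (LinearMap.range incl) :=
    isNoetherian_of_subset_grade (n := 0) _ (by rintro _ ⟨c, rfl⟩; exact c.2)
  exact isNoetherian_of_linearEquiv (LinearEquiv.ofInjective incl Subtype.val_injective).symm

theorem fg_gradeSubmodule [IsNoetherianRing A] (n : L) : (gradeSubmodule 𝒜 n).FG :=
  have := isNoetherian_of_subset_grade (gradeSubmodule 𝒜 n) subset_rfl
  Module.Finite.iff_fg.mp inferInstance

end GradedRing

theorem gradeZero_noetherian_and_pieces_finite [IsNoetherianRing A] :
    IsNoetherianRing (𝒜 0) ∧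
      ∀ n : L, ∃ s : Finset A, (s : Set A) ⊆ (𝒜 n : Set A) ∧
        ∀ x ∈ 𝒜 n, x ∈ Submodule.span (𝒜 0) (s : Set A) := by
  refine ⟨GradedRing.isNoetherianRing_gradeZero 𝒜, fun n => ?_⟩
  obtain ⟨s, hs⟩ := GradedRing.fg_gradeSubmodule 𝒜 n
  exact ⟨s, fun x hx => (hs ▸ Submodule.subset_span hx : x ∈ GradedRing.gradeSubmodule 𝒜 n),
    fun x hx => hs ▸ hx⟩
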